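/- arXiv:1801.04492 — 4 statements merged into one kernel-verified Lean document; each statement's English description precedes it below -/
import Mathlib

section
/- Let κ > 1, s = 1/κ, β > 0, ω > 0, let P be the symmetric 3×3 matrix with entries a = −(1/β + 2)ω + 2(β+2) + β(s−1)/ω − 2(β+1)s, b = ((2β+1)(s−1) + ω)/2, c = β − ω(s+ω−1)/(2β(s−1)) − (β+1)s − ω + 1, d = (1−s)β, e = ω − (1−s)β, f = ω²/(β(1−s)), and set H = −G(P), written in 2×2 blocks H = [[H₁, H₂], [H₂ᵀ, H₃]]. Then the bottom-right block satisfies H₃ = [[ω³/(β(1−s)), −ω], [−ω, β(1−s)/ω]]; this matrix has eigenvalues 0 and (β(1−s) + ω⁴/(β(1−s)))/ω, and it is positive semidefinite. -/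
open Matrix

/-- The polynomial `Q(ω; κ, β)` from equation (8) of the paper. -/
noncomputable def Qpoly (ω κ β : ℝ) : ℝ :=
  -4*(1-κ)^2*β^2*(ω-2) + ω*(κ-1+κ*ω)^2 - 4*(1-κ)*β*ω*(-3*κ+1+κ*ω)

/-- The matrix `Â` (with `L = 1`). -/
noncomputable def Ahat (β : ℝ) : Matrix (Fin 3) (Fin 3) ℝ :=
  !![β+1, -β, 0; 1, 0, 0; -(β+1), β, 0]

/-- The matrix `B̂` (with `α = 1`). -/
noncomputable def Bhat : Matrix (Fin 3) (Fin 1) ℝ := !![-1; 0; 1]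

/-- The 2×4 matrix `[Ĉ D̂]` (with `L = 1`, `m = s`, `ρ² = ω`). -/
noncomputable def CDhat (s β ω : ℝ) : Matrix (Fin 2) (Fin 4) ℝ :=
  !![β+1, -β, ω, -1; -s*(β+1), s*β, 0, 1]

/-- The matrix `M`. -/
noncomputable def Mmat : Matrix (Fin 2) (Fin 2) ℝ := !![0, 1; 1, 0]

/-- The 4×4 matrix `G(P)` of the IQC linear matrix inequality, specialized to
`λ = α = L = 1`, `m = s`, `ρ² = τ² = ω`. -/
noncomputable def Gmat (s β ω : ℝ) (P : Matrix (Fin 3) (Fin 3) ℝ) :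
    Matrix (Fin 4) (Fin 4) ℝ :=
  (Matrix.reindex finSumFinEquiv finSumFinEquiv
    (Matrix.fromBlocks ((Ahat β)ᵀ * P * (Ahat β) - ω • P) ((Ahat β)ᵀ * P * Bhat)
      (Bhatᵀ * P * (Ahat β)) (Bhatᵀ * P * Bhat)))
  + (CDhat s β ω)ᵀ * Mmat * (CDhat s β ω)

/-- The symmetric matrix `P` with entries given by equations (9)-(14) of the paper. -/
noncomputable def Pmat (s β ω : ℝ) : Matrix (Fin 3) (Fin 3) ℝ :=
  !![-(1/β+2)*ω + 2*(β+2) + β*(s-1)/ω - 2*(β+1)*s,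
     ((2*β+1)*(s-1) + ω)/2,
     β - ω*(s+ω-1)/(2*β*(s-1)) - (β+1)*s - ω + 1;
     ((2*β+1)*(s-1) + ω)/2,
     (1-s)*β,
     ω - (1-s)*β;
     β - ω*(s+ω-1)/(2*β*(s-1)) - (β+1)*s - ω + 1,
     ω - (1-s)*β,
     ω^2/(β*(1-s))]

/-- The bottom-right 2×2 block `H₃` of `H = -G(P)`: `H₃ i j = H (i+2) (j+2)`. -/
noncomputable def H3blk (s β ω : ℝ) (P : Matrix (Fin 3) (Fin 3) ℝ) :
    Matrix (Fin 2) (Fin 2) ℝ :=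
  (-(Gmat s β ω P)).submatrix (Fin.natAdd 2) (Fin.natAdd 2)

/-!
With `t = β(1 - s)`, the bottom-right block of `G(P)` involves `P` only through `P₂₂` and
`P₀₀ - 2P₀₂ + P₂₂`; for the given `P` these are `ω²/t` and `2 - t/ω`, so
`H₃ = (tω)⁻¹ v vᵀ` with `v = (ω², -t)`. A rank-one Gram matrix is positive semidefinite, and
a singular `2 × 2` matrix has spectrum `{0, trace}`.
-/

theorem Gmat_submatrix_natAdd (s β ω : ℝ) (P : Matrix (Fin 3) (Fin 3) ℝ) :
    (Gmat s β ω P).submatrix (Fin.natAdd 2) (Fin.natAdd 2) =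
      !![-(ω * P 2 2), ω; ω, P 0 0 - P 0 2 - P 2 0 + P 2 2 - 2] := by
  have e0 : (finSumFinEquiv (m := 3) (n := 1)).symm (Fin.natAdd 2 (0 : Fin 2)) =
      Sum.inl 2 := by
    decide
  have e1 : (finSumFinEquiv (m := 3) (n := 1)).symm (Fin.natAdd 2 (1 : Fin 2)) =
      Sum.inr 0 := by
    decide
  ext i j
  fin_cases i <;> fin_cases j <;>
  · simp only [Gmat, Matrix.add_apply, reindex_apply, submatrix_apply, Fin.zero_eta, Fin.mk_one,
      e0, e1]
    simp [Ahat, Bhat, CDhat, Mmat, mul_apply, Fin.sum_univ_succ, fromBlocks]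
    try ring

theorem H3blk_Pmat {s β ω : ℝ} (hs : s ≠ 1) (hβ : β ≠ 0) (hω : ω ≠ 0) :
    H3blk s β ω (Pmat s β ω) = !![ω^3/(β*(1-s)), -ω; -ω, β*(1-s)/ω] := by
  have h1s : 1 - s ≠ 0 := sub_ne_zero.mpr hs.symm
  have hs1 : s - 1 ≠ 0 := sub_ne_zero.mpr hs
  have hcorner : Pmat s β ω 0 0 - Pmat s β ω 0 2 - Pmat s β ω 2 0 + Pmat s β ω 2 2 - 2 =
      -(β * (1 - s) / ω) := by
    simp [Pmat]
    field_simp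
    ring
  rw [H3blk, Matrix.submatrix_neg, Pi.neg_apply, Pi.neg_apply, Gmat_submatrix_natAdd, hcorner]
  ext i j
  fin_cases i <;> fin_cases j <;> simp [Pmat]
  field_simp

theorem spectrum_fin_two_of_det_eq_zero {K : Type*} [Field K] (A : Matrix (Fin 2) (Fin 2) K)
    (hA : A.det = 0) : spectrum K A = {0, A.trace} := by
  ext μ
  have hroot : μ ^ 2 - A.trace * μ = μ * (μ - A.trace) := by ring
  simp [mem_spectrum_iff_isRoot_charpoly, charpoly_fin_two, hA, hroot, sub_eq_zero]

section RankOne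

variable {t ω : ℝ}

theorem rankOne_eq_smul_vecMulVec (ht : t ≠ 0) (hω : ω ≠ 0) :
    !![ω^3/t, -ω; -ω, t/ω] = (t * ω)⁻¹ • vecMulVec ![ω^2, -t] ![ω^2, -t] := by
  ext i j
  fin_cases i <;> fin_cases j <;> simp [vecMulVec] <;> field_simp

theorem spectrum_rankOne (ht : t ≠ 0) (hω : ω ≠ 0) :
    spectrum ℝ !![ω^3/t, -ω; -ω, t/ω] = {0, (t + ω^4/t)/ω} := by
  rw [spectrum_fin_two_of_det_eq_zero _ (by simp [det_fin_two]; field_simp; ring)]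
  congr 2
  simp [trace_fin_two]
  field_simp
  ring

theorem posSemidef_rankOne (ht : 0 < t) (hω : 0 < ω) :
    (!![ω^3/t, -ω; -ω, t/ω] : Matrix (Fin 2) (Fin 2) ℝ).PosSemidef := by
  rw [rankOne_eq_smul_vecMulVec ht.ne' hω.ne']
  exact (posSemidef_vecMulVec_self_star _).smul (by positivity)

end RankOne

/-- The bottom-right block `H₃` of `H = -G(P)` equals
`[[ω³/(β(1−s)), −ω], [−ω, β(1−s)/ω]]`, its eigenvalues (spectrum) are `0` and
`(β(1−s) + ω⁴/(β(1−s)))/ω`, and it is positive semidefinite. -/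
theorem stmt1 (κ β ω : ℝ) (hκ : 1 < κ) (hβ : 0 < β) (hω : 0 < ω) :
    H3blk (1/κ) β ω (Pmat (1/κ) β ω) =
      !![ω^3/(β*(1-1/κ)), -ω; -ω, β*(1-1/κ)/ω] ∧
    spectrum ℝ (H3blk (1/κ) β ω (Pmat (1/κ) β ω)) =
      {0, (β*(1-1/κ) + ω^4/(β*(1-1/κ)))/ω} ∧
    (H3blk (1/κ) β ω (Pmat (1/κ) β ω)).PosSemidef := by
  have hs : 1/κ < 1 := (div_lt_one (by linarith)).mpr hκ
  have ht : 0 < β * (1 - 1/κ) := mul_pos hβ (by linarith)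
  rw [H3blk_Pmat hs.ne hβ.ne' hω.ne']
  exact ⟨rfl, spectrum_rankOne ht.ne' hω.ne', posSemidef_rankOne ht hω⟩
end

section
/- Let κ > 1 and ω ∈ (0, 1). If there exists β ∈ ℝ with Q(ω; κ, β) = 0, then ω ≥ 1 − √(2κ−1)/κ. -/
/-!
As a polynomial in `β`, `Q(ω; κ, β)` is a quadratic whose discriminant factors as
`32 (κ-1)² ω (1-ω) ((2κ-1) - κ²(1-ω)²)`. A real root forces the discriminant to be nonnegative,
and for `κ ≠ 1`, `0 < ω < 1` the prefactor is positive, so `κ(1-ω) ≤ √(2κ-1)`.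
-/

lemma Qpoly_eq_quadratic (ω κ β : ℝ) :
    Qpoly ω κ β = (4*(κ-1)^2*(2-ω)) * (β*β) + (4*(κ-1)*ω*(1-3*κ+κ*ω)) * β
      + ω*(κ-1+κ*ω)^2 := by
  unfold Qpoly
  ring

lemma discrim_Qpoly (ω κ : ℝ) :
    discrim (4*(κ-1)^2*(2-ω)) (4*(κ-1)*ω*(1-3*κ+κ*ω)) (ω*(κ-1+κ*ω)^2)
      = 32*(κ-1)^2*ω*(1-ω) * ((2*κ-1) - (κ*(1-ω))^2) := by
  unfold discrim
  ring

lemma sq_mul_one_sub_le_of_Qpoly_eq_zero {ω κ β : ℝ} (hκ : κ ≠ 1) (hω0 : 0 < ω) (hω1 : ω < 1)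
    (hQ : Qpoly ω κ β = 0) : (κ*(1-ω))^2 ≤ 2*κ - 1 := by
  rw [Qpoly_eq_quadratic] at hQ
  have hdiscrim := discrim_eq_sq_of_quadratic_eq_zero hQ
  rw [discrim_Qpoly] at hdiscrim
  have hprefactor : 0 < 32*(κ-1)^2*ω*(1-ω) := by
    have : 0 < (κ-1)^2 := sq_pos_of_ne_zero (sub_ne_zero.mpr hκ)
    have : 0 < 1 - ω := sub_pos.mpr hω1
    positivity
  have := nonneg_of_mul_nonneg_right (hdiscrim ▸ sq_nonneg _) hprefactor
  linarith

/-- If `Q(ω; κ, β) = 0` admits a real solution `β` for some `ω ∈ (0,1)`,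
then `ω ≥ 1 − √(2κ−1)/κ`. -/
theorem stmt6 (κ ω : ℝ) (hκ : 1 < κ) (hω0 : 0 < ω) (hω1 : ω < 1)
    (h : ∃ β : ℝ, Qpoly ω κ β = 0) :
    1 - Real.sqrt (2*κ - 1)/κ ≤ ω := by
  obtain ⟨β, hQ⟩ := h
  have hbound : κ * (1 - ω) ≤ Real.sqrt (2*κ - 1) :=
    Real.le_sqrt_of_sq_le (sq_mul_one_sub_le_of_Qpoly_eq_zero hκ.ne' hω0 hω1 hQ)
  rw [sub_le_comm, le_div_iff₀ (by linarith)]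
  linarith
end

section
/- For every κ > 1, with ω* = 1 − √(2κ−1)/κ and β* = (2κ − √(2κ−1) − 1)/(2(κ + √(2κ−1))), one has Q(ω*; κ, β*) = 0; moreover β* = ω*(κ(ω*−3)+1)/(2(κ−1)(ω*−2)). -/
/-!
As a polynomial in `β`, `Q(ω; κ, β)` is a quadratic whose vertex is
`β₀(ω) = ω(κ(ω−3)+1)/(2(κ−1)(ω−2))` and whose value there is
`2ω(ω−1)(κ²(ω−1)² − (2κ−1))/(ω−2)`. At `ω*` one has `κ(ω* − 1) = −√(2κ−1)`, so this value
vanishes, and a direct computation using `√(2κ−1)² = 2κ−1` shows `β* = β₀(ω*)`.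
-/

noncomputable def Qvertex (ω κ : ℝ) : ℝ :=
  ω*(κ*(ω - 3) + 1)/(2*(κ - 1)*(ω - 2))

theorem Qpoly_eq_vertex_form {ω κ : ℝ} (hκ : κ ≠ 1) (hω : ω ≠ 2) (β : ℝ) :
    Qpoly ω κ β = -4*(κ - 1)^2*(ω - 2)*(β - Qvertex ω κ)^2
      + 2*ω*(ω - 1)*(κ^2*(ω - 1)^2 - (2*κ - 1))/(ω - 2) := by
  have hκ' : κ - 1 ≠ 0 := sub_ne_zero.mpr hκ
  have hω' : ω - 2 ≠ 0 := sub_ne_zero.mpr hω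
  unfold Qpoly Qvertex
  field_simp
  ring

theorem Qpoly_vertex_eq_zero {ω κ : ℝ} (hκ : κ ≠ 1) (hω : ω ≠ 2)
    (h : κ^2*(ω - 1)^2 = 2*κ - 1) : Qpoly ω κ (Qvertex ω κ) = 0 := by
  rw [Qpoly_eq_vertex_form hκ hω, h]
  ring

theorem Qvertex_one_sub_div {κ s : ℝ} (hκ₀ : κ ≠ 0) (hκ₁ : κ ≠ 1) (hκs : κ + s ≠ 0)
    (hs : s^2 = 2*κ - 1) :
    Qvertex (1 - s/κ) κ = (2*κ - s - 1)/(2*(κ + s)) := by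
  have hκ' : κ - 1 ≠ 0 := sub_ne_zero.mpr hκ₁
  have hω : 1 - s/κ - 2 ≠ 0 := by
    rw [show 1 - s/κ - 2 = -((κ + s)/κ) by field_simp; ring]
    exact neg_ne_zero.mpr (div_ne_zero hκs hκ₀)
  unfold Qvertex
  rw [div_eq_div_iff (mul_ne_zero (mul_ne_zero two_ne_zero hκ') hω)
    (mul_ne_zero two_ne_zero hκs)]
  field_simp
  linear_combination (κ + s) * hs

/-- With `ω* = 1 − √(2κ−1)/κ` and `β* = (2κ − √(2κ−1) − 1)/(2(κ + √(2κ−1)))`,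
one has `Q(ω*; κ, β*) = 0`, and `β* = ω*(κ(ω*−3)+1)/(2(κ−1)(ω*−2))`. -/
theorem stmt7 (κ : ℝ) (hκ : 1 < κ) (ωs βs : ℝ)
    (hω : ωs = 1 - Real.sqrt (2*κ - 1)/κ)
    (hβ : βs = (2*κ - Real.sqrt (2*κ - 1) - 1)/(2*(κ + Real.sqrt (2*κ - 1)))) :
    Qpoly ωs κ βs = 0 ∧
    βs = ωs*(κ*(ωs - 3) + 1)/(2*(κ - 1)*(ωs - 2)) := by
  set s := Real.sqrt (2*κ - 1)
  have hs : s^2 = 2*κ - 1 := Real.sq_sqrt (by linarith)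
  have hκ₀ : 0 < κ := by linarith
  have hκs : 0 < κ + s := by positivity
  have hβ_vertex : βs = Qvertex ωs κ := by
    rw [hβ, hω, Qvertex_one_sub_div hκ₀.ne' hκ.ne' hκs.ne' hs]
  have hω2 : ωs ≠ 2 := by
    rw [hω]
    have : 0 ≤ s/κ := by positivity
    linarith
  have hωκ : κ^2*(ωs - 1)^2 = 2*κ - 1 := by
    rw [hω, ← hs]
    field_simp
    ring
  exact ⟨hβ_vertex ▸ Qpoly_vertex_eq_zero hκ.ne' hω2 hωκ, hβ_vertex⟩
end

section
/- Let κ > 1, s = 1/κ, β > 0, and ω ∈ (0, 1) with Q(ω; κ, β) = 0, and let P = [[a, b, c], [b, d, e], [c, e, f]] be the symmetric 3×3 matrix with entries a = −(1/β + 2)ω + 2(β+2) + β(s−1)/ω − 2(β+1)s, b = ((2β+1)(s−1) + ω)/2, c = β − ω(s+ω−1)/(2β(s−1)) − (β+1)s − ω + 1, d = (1−s)β, e = ω − (1−s)β, f = ω²/(β(1−s)). Then f = κω²/(β(κ−1)), d·f − e² = β(κ−1)(β(1−κ) + 2κω)/κ², and det P = β²(κ−1)²((ω−1)(β(1−κ)+κω)+ω)/(κ³ω).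 -/
open Matrix

section InvKappa

variable {κ β ω : ℝ}

theorem Pmat_inv_two_two (hκ0 : κ ≠ 0) :
    Pmat (1/κ) β ω 2 2 = κ*ω^2/(β*(κ-1)) := by
  change ω^2/(β*(1-1/κ)) = _
  rw [one_sub_div hκ0, mul_div_assoc', div_div_eq_mul_div, mul_comm κ]

theorem Pmat_inv_minor_one_two (hκ0 : κ ≠ 0) (hκ1 : κ ≠ 1) (hβ : β ≠ 0) :
    Pmat (1/κ) β ω 1 1 * Pmat (1/κ) β ω 2 2 - (Pmat (1/κ) β ω 1 2)^2 =
      β*(κ-1)*(β*(1-κ) + 2*κ*ω)/κ^2 := by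
  change (1-1/κ)*β * (ω^2/(β*(1-1/κ))) - (ω - (1-1/κ)*β)^2 = _
  field_simp
  ring

theorem det_Pmat_inv (hκ0 : κ ≠ 0) (hκ1 : κ ≠ 1) (hβ : β ≠ 0) (hω : ω ≠ 0) :
    (Pmat (1/κ) β ω).det =
      β^2*(κ-1)^2*((ω-1)*(β*(1-κ) + κ*ω) + ω)/(κ^3*ω) - Qpoly ω κ β / (2*κ^2) := by
  rw [det_fin_three]
  simp only [Pmat, Qpoly, of_apply, cons_val', cons_val_zero, cons_val_one, cons_val_two,
    head_cons, head_fin_const, tail_cons, empty_val', cons_val_fin_one]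
  field_simp
  ring

end InvKappa

theorem stmt10_general (κ β ω : ℝ) (hκ : 1 < κ) (hβ : 0 < β) (hω0 : 0 < ω)
    (hQ : Qpoly ω κ β = 0) :
    Pmat (1/κ) β ω 2 2 = κ*ω^2/(β*(κ-1)) ∧
    Pmat (1/κ) β ω 1 1 * Pmat (1/κ) β ω 2 2 - (Pmat (1/κ) β ω 1 2)^2 =
      β*(κ-1)*(β*(1-κ) + 2*κ*ω)/κ^2 ∧
    (Pmat (1/κ) β ω).det =
      β^2*(κ-1)^2*((ω-1)*(β*(1-κ) + κ*ω) + ω)/(κ^3*ω) := by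
  have hκ0 : κ ≠ 0 := by positivity
  refine ⟨Pmat_inv_two_two hκ0, Pmat_inv_minor_one_two hκ0 hκ.ne' hβ.ne', ?_⟩
  rw [det_Pmat_inv hκ0 hκ.ne' hβ.ne' hω0.ne', hQ, zero_div, sub_zero]

/-- The three leading principal minors of `P` (after permuting rows/columns) used in
the proof of Theorem 4: `f = κω²/(β(κ−1))`, `df − e² = β(κ−1)(β(1−κ)+2κω)/κ²`, and
`det P = β²(κ−1)²((ω−1)(β(1−κ)+κω)+ω)/(κ³ω)`. -/
theorem stmt10 (κ β ω : ℝ) (hκ : 1 < κ) (hβ : 0 < β) (hω0 : 0 < ω) (hω1 : ω < 1)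
    (hQ : Qpoly ω κ β = 0) :
    Pmat (1/κ) β ω 2 2 = κ*ω^2/(β*(κ-1)) ∧
    Pmat (1/κ) β ω 1 1 * Pmat (1/κ) β ω 2 2 - (Pmat (1/κ) β ω 1 2)^2 =
      β*(κ-1)*(β*(1-κ) + 2*κ*ω)/κ^2 ∧
    (Pmat (1/κ) β ω).det =
      β^2*(κ-1)^2*((ω-1)*(β*(1-κ) + κ*ω) + ω)/(κ^3*ω) :=
  stmt10_general κ β ω hκ hβ hω0 hQ
end
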